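/- Local reasoning II: Let g ←σ f →π h with nonempty interface I = Comp(g) ∩ Comp(h). For α ∈ ℒ(I) and positive β ∈ ℒ(Comp(h))^□: if g,𝒱 ⊨ α and h,𝒱 ⊨ α → β, then f,𝒱 ⊨ β. -/

import Mathlib

/-- A system: a set of behaviours `B` together with a map into component snapshots. -/
structure System (Comp : Type) (Beh : Comp → Type) where
  B : Type
  C : Set Comp
  f : B → (c : Comp) → c ∈ C → Beh c

variable {Comp : Type} {Beh : Comp → Type}

/-- `σ` is an implementation of `g` in `f`: `Comp(g) ⊆ Comp(f)` and `f_{Comp(g)} = g ∘ σ`. -/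
def Implements (f g : System Comp Beh) (σ : f.B → g.B) : Prop :=
  g.C ⊆ f.C ∧ ∀ (b : f.B) (c : Comp) (hg : c ∈ g.C) (hf : c ∈ f.C),
    f.f b c hf = g.f (σ b) c hg
/-- Formulas of the modal logic `ℒ(C)^□` (atoms, ∧, ¬, □). -/
inductive Fml (Comp : Type) (Var : Comp → Type) : Type
  | atom (c : Comp) (p : Var c)
  | and (φ ψ : Fml Comp Var)
  | not (φ : Fml Comp Var)
  | box (φ : Fml Comp Var)

variable {Var : Comp → Type}

/-- Satisfaction `f, 𝒱, x ⊨ φ`. -/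
def Sat (V : (c : Comp) → Var c → Set (Beh c)) (f : System Comp Beh) :
    f.B → Fml Comp Var → Prop
  | x, .atom c p => ∃ hc : c ∈ f.C, f.f x c hc ∈ V c p
  | x, .and φ ψ => Sat V f x φ ∧ Sat V f x ψ
  | x, .not φ => ¬ Sat V f x φ
  | _, .box φ => ∀ y : f.B, Sat V f y φ

/-- The formula only uses atoms over the components in `C`. -/
def InLogic (C : Set Comp) : Fml Comp Var → Prop
  | .atom c _ => c ∈ C
  | .and φ ψ => InLogic C φ ∧ InLogic C ψ
  | .not φ => InLogic C φ
  | .box φ => InLogic C φ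

/-- Formulas of the elementary logic: no `□`. -/
def Elementary : Fml Comp Var → Prop
  | .atom _ _ => True
  | .and φ ψ => Elementary φ ∧ Elementary ψ
  | .not φ => Elementary φ
  | .box _ => False

/-- Classical implication `φ → ψ := ¬(φ ∧ ¬ψ)`. -/
def Fml.imp (φ ψ : Fml Comp Var) : Fml Comp Var := .not (.and φ (.not ψ))

/-- `f, 𝒱 ⊨ φ`: satisfaction at all behaviours. -/
def SatAll (V : (c : Comp) → Var c → Set (Beh c)) (f : System Comp Beh)
    (φ : Fml Comp Var) : Prop :=
  ∀ x : f.B, Sat V f x φ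
mutual
  /-- Positive: no `□` in the scope of an odd number of `¬`. -/
  def PosFml : Fml Comp Var → Prop
    | .atom _ _ => True
    | .and φ ψ => PosFml φ ∧ PosFml ψ
    | .not φ => NegFml φ
    | .box φ => PosFml φ
  /-- Negative: no `□` in the scope of an even number of `¬`. -/
  def NegFml : Fml Comp Var → Prop
    | .atom _ _ => True
    | .and φ ψ => NegFml φ ∧ NegFml ψ
    | .not φ => PosFml φ
    | .box _ => False
end

theorem InLogic.mono {C D : Set Comp} (hCD : C ⊆ D) {φ : Fml Comp Var} (hφ : InLogic C φ) :
    InLogic D φ := by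
  induction φ with
  | atom c p => exact hCD hφ
  | and φ ψ ihφ ihψ => exact ⟨ihφ hφ.1, ihψ hφ.2⟩
  | not φ ih => exact ih hφ
  | box φ ih => exact ih hφ

namespace Implements

variable {V : (c : Comp) → Var c → Set (Beh c)} {f g : System Comp Beh} {σ : f.B → g.B}

theorem sat_atom_iff (hσ : Implements f g σ) {c : Comp} (hc : c ∈ g.C) (p : Var c) (x : f.B) :
    Sat V f x (.atom c p) ↔ Sat V g (σ x) (.atom c p) := by
  simp only [Sat, hσ.1 hc, hc, exists_true_left, hσ.2 x c hc (hσ.1 hc)]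

theorem sat_iff_of_elementary (hσ : Implements f g σ) {φ : Fml Comp Var} (hel : Elementary φ)
    (hlog : InLogic g.C φ) (x : f.B) : Sat V f x φ ↔ Sat V g (σ x) φ := by
  induction φ with
  | atom c p => exact hσ.sat_atom_iff hlog p x
  | and φ ψ ihφ ihψ => exact and_congr (ihφ hel.1 hlog.1) (ihψ hel.2 hlog.2)
  | not φ ih => exact not_congr (ih hel hlog)
  | box φ => exact hel.elim

/-- `¬` swaps positive and negative formulas, so both directions are proved together. -/
theorem sat_transfer (hσ : Implements f g σ) {φ : Fml Comp Var} (hlog : InLogic g.C φ) :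
    (PosFml φ → ∀ x, Sat V g (σ x) φ → Sat V f x φ) ∧
      (NegFml φ → ∀ x, Sat V f x φ → Sat V g (σ x) φ) := by
  induction φ with
  | atom c p =>
    exact ⟨fun _ x => (hσ.sat_atom_iff hlog p x).2, fun _ x => (hσ.sat_atom_iff hlog p x).1⟩
  | and φ ψ ihφ ihψ =>
    exact ⟨fun hpos x hs => ⟨(ihφ hlog.1).1 hpos.1 x hs.1, (ihψ hlog.2).1 hpos.2 x hs.2⟩,
      fun hneg x hs => ⟨(ihφ hlog.1).2 hneg.1 x hs.1, (ihψ hlog.2).2 hneg.2 x hs.2⟩⟩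
  | not φ ih =>
    exact ⟨fun hpos x hs hf => hs ((ih hlog).2 hpos x hf),
      fun hneg x hs hg => hs ((ih hlog).1 hneg x hg)⟩
  | box φ ih =>
    exact ⟨fun hpos x hs y => (ih hlog).1 hpos y (hs (σ y)), fun hneg => hneg.elim⟩

theorem sat_of_posFml (hσ : Implements f g σ) {φ : Fml Comp Var} (hpos : PosFml φ)
    (hlog : InLogic g.C φ) {x : f.B} (hs : Sat V g (σ x) φ) : Sat V f x φ :=
  (hσ.sat_transfer hlog).1 hpos x hs

end Implements

/-- Local reasoning II: as Local reasoning I, but `β` may be any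
positive formula of `ℒ(Comp(h))^□`. -/
theorem local_reasoning_II (V : (c : Comp) → Var c → Set (Beh c))
    (f g h : System Comp Beh) (σ : f.B → g.B) (π : f.B → h.B)
    (hσ : Implements f g σ) (hπ : Implements f h π)
    (hI : (g.C ∩ h.C).Nonempty)
    (α β : Fml Comp Var)
    (hαel : Elementary α) (hαlog : InLogic (g.C ∩ h.C) α)
    (hβpos : PosFml β) (hβlog : InLogic h.C β)
    (hgα : SatAll V g α) (hhαβ : SatAll V h (Fml.imp α β)) :
    SatAll V f β := by
  intro x
  have hαf : Sat V f x α :=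
    (hσ.sat_iff_of_elementary hαel (hαlog.mono Set.inter_subset_left) x).2 (hgα (σ x))
  have hαh : Sat V h (π x) α :=
    (hπ.sat_iff_of_elementary hαel (hαlog.mono Set.inter_subset_right) x).1 hαf
  have hβh : Sat V h (π x) β := not_not.1 fun hnβ => hhαβ (π x) ⟨hαh, hnβ⟩
  exact hπ.sat_of_posFml hβpos hβlog hβh
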